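/- Krylov–Bogolyubov bound: for any symmetric linear map A on a finite-dimensional real inner product space, any nonzero vector x, and any real μ, there exists an eigenvalue λ of A with |λ − μ| ≤ ‖A x − μ x‖ / ‖x‖. -/

import Mathlib

/-!
Expand `x` in an orthonormal eigenbasis of `A`, with eigenvalues `λᵢ` and coordinates `cᵢ`.
Then `‖A x - μ x‖² = ∑ (λᵢ - μ)² |cᵢ|²`, which is at least `minᵢ (λᵢ - μ)² · ‖x‖²`; the
eigenvalue closest to `μ` therefore satisfies the bound.
-/

open Module Module.End

namespace LinearMap.IsSymmetric

variable {𝕜 E : Type*} [RCLike 𝕜] [NormedAddCommGroup E] [InnerProductSpace 𝕜 E]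
  [FiniteDimensional 𝕜 E] {T : E →ₗ[𝕜] E} {n : ℕ}

theorem norm_apply_sub_smul_sq_eq_sum (hT : T.IsSymmetric) (hn : finrank 𝕜 E = n)
    (x : E) (μ : ℝ) :
    ‖T x - (μ : 𝕜) • x‖ ^ 2 =
      ∑ i, (hT.eigenvalues hn i - μ) ^ 2 * ‖(hT.eigenvectorBasis hn).repr x i‖ ^ 2 := by
  rw [← (hT.eigenvectorBasis hn).repr.norm_map, EuclideanSpace.norm_sq_eq]
  refine Finset.sum_congr rfl fun i _ => ?_
  have hcoord : (hT.eigenvectorBasis hn).repr (T x - (μ : 𝕜) • x) i =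
      ((hT.eigenvalues hn i - μ : ℝ) : 𝕜) * (hT.eigenvectorBasis hn).repr x i := by
    simp only [map_sub, map_smul, PiLp.sub_apply, PiLp.smul_apply, smul_eq_mul,
      hT.eigenvectorBasis_apply_self_apply]
    ring
  rw [hcoord, norm_mul, mul_pow, RCLike.norm_ofReal, sq_abs]

theorem exists_hasEigenvalue_abs_sub_mul_norm_le (hT : T.IsSymmetric) {x : E} (hx : x ≠ 0)
    (μ : ℝ) :
    ∃ lam : ℝ, HasEigenvalue T (lam : 𝕜) ∧ |lam - μ| * ‖x‖ ≤ ‖T x - (μ : 𝕜) • x‖ := by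
  have hn : finrank 𝕜 E = finrank 𝕜 E := rfl
  have : Nonempty (Fin (finrank 𝕜 E)) := ⟨⟨0, finrank_pos_iff_exists_ne_zero.mpr ⟨x, hx⟩⟩⟩
  obtain ⟨i₀, -, hi₀⟩ := Finset.univ.exists_min_image (fun i => |hT.eigenvalues hn i - μ|)
    Finset.univ_nonempty
  refine ⟨hT.eigenvalues hn i₀, hT.hasEigenvalue_eigenvalues hn i₀, ?_⟩
  set c := (hT.eigenvectorBasis hn).repr x
  have hclosest : ∀ i, (hT.eigenvalues hn i₀ - μ) ^ 2 ≤ (hT.eigenvalues hn i - μ) ^ 2 :=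
    fun i => sq_le_sq.2 (hi₀ i (Finset.mem_univ i))
  refine (pow_le_pow_iff_left₀ (by positivity) (norm_nonneg _) two_ne_zero).1 ?_
  calc (|hT.eigenvalues hn i₀ - μ| * ‖x‖) ^ 2
      = ∑ i, (hT.eigenvalues hn i₀ - μ) ^ 2 * ‖c i‖ ^ 2 := by
        rw [mul_pow, sq_abs, ← (hT.eigenvectorBasis hn).repr.norm_map, EuclideanSpace.norm_sq_eq,
          Finset.mul_sum]
    _ ≤ ∑ i, (hT.eigenvalues hn i - μ) ^ 2 * ‖c i‖ ^ 2 :=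
        Finset.sum_le_sum fun i _ => mul_le_mul_of_nonneg_right (hclosest i) (by positivity)
    _ = ‖T x - (μ : 𝕜) • x‖ ^ 2 := (hT.norm_apply_sub_smul_sq_eq_sum hn x μ).symm

end LinearMap.IsSymmetric

/-- Krylov–Bogolyubov bound: for a symmetric linear map `A` on `ℝ^N`, a
nonzero vector `x` and any `μ ∈ ℝ`, there is an eigenvalue `λ` of `A` with
`|λ − μ| ≤ ‖Ax − μx‖ / ‖x‖`. -/
theorem krylov_bogolyubov (N : ℕ)
    (A : EuclideanSpace ℝ (Fin N) →ₗ[ℝ] EuclideanSpace ℝ (Fin N))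
    (hA : ∀ u v : EuclideanSpace ℝ (Fin N),
        inner ℝ (A u) v = (inner ℝ u (A v) : ℝ))
    (x : EuclideanSpace ℝ (Fin N)) (hx : x ≠ 0) (μ : ℝ) :
    ∃ lam : ℝ, Module.End.HasEigenvalue A lam ∧
      |lam - μ| ≤ ‖A x - μ • x‖ / ‖x‖ := by
  obtain ⟨lam, hlam, hbound⟩ :=
    LinearMap.IsSymmetric.exists_hasEigenvalue_abs_sub_mul_norm_le (𝕜 := ℝ) hA hx μ
  exact ⟨lam, hlam, (le_div_iff₀ (norm_pos_iff.2 hx)).2 hbound⟩
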